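/- For every c ≥ 0, the first passage time of the non-adaptive Metropolis chain satisfies lim_{ε→0} P((ε/6)·T̄₁→₃ > c) = e^{−c}; that is, (ε/6)·T̄₁→₃ converges in distribution, as ε → 0, to an exponential random variable with parameter 1. -/

import Mathlib

open MeasureTheory ProbabilityTheory Filter Real Set Topology

noncomputable section

/-- The state space: index `0` is state "1", index `1` is state "2", index `2` is state "3". -/
abbrev WLState := Fin 3

/-- First passage time of the trajectory `ω` to the state `s`
(with the convention `sInf ∅ = 0`). -/
def hitTime (s : WLState) (ω : ℕ → WLState) : ℕ := sInf {n : ℕ | ω n = s}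

/-- A measure `μ` on trajectory space is the law of the (possibly path-dependent) Markov chain
with initial state `x0` and transition matrix `P x k` at time `k` given the past path `x`,
expressed through its cylinder probabilities. -/
def IsChainLaw (P : (ℕ → WLState) → ℕ → WLState → WLState → ℝ) (x0 : WLState)
    (μ : Measure (ℕ → WLState)) : Prop :=
  ∀ (n : ℕ) (x : ℕ → WLState),
    μ {ω : ℕ → WLState | ∀ k ≤ n, ω k = x k} =
      (if x 0 = x0 then (1 : ENNReal) else 0) *
        ∏ k ∈ Finset.range n, ENNReal.ofReal (P x k (x k) (x (k + 1)))

/-- Transition matrix of the non-adaptive Metropolis chain: rows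
`(1-ε/3, ε/3, 0)`, `(1/3, 1/3, 1/3)`, `(0, ε/3, 1-ε/3)`. -/
def Pbar (ε : ℝ) : WLState → WLState → ℝ :=
  ![![1 - ε / 3, ε / 3, 0], ![1 / 3, 1 / 3, 1 / 3], ![0, ε / 3, 1 - ε / 3]]

/-!
Killing the chain on entering state 3 turns `P(T̄₁→₃ > n)` into the first row sum of the `n`-th
power of the substochastic block `[[1 - ε/3, ε/3], [1/3, 1/3]]` of `P̄` on `{1, 2}`. Its eigenvalues
are `λ± = 2/3 - ε/6 ± √(1/9 + ε²/36)`, and the spectral decomposition of `(1, 0)` gives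
`λ₊ⁿ ≤ P(T̄₁→₃ > n) ≤ (1 + ε/4) λ₊ⁿ`. Since `λ₊ = 1 - ε/6 + o(ε)`, both bounds at
`n = ⌊6c/ε⌋` tend to `e^{-c}`.
-/

theorem tendsto_one_add_pow_exp_of_tendsto_zero {α : Type*} {l : Filter α} {g : α → ℝ}
    {n : α → ℕ} {t : ℝ} (hg : Tendsto g l (𝓝 0))
    (hng : Tendsto (fun x => n x * g x) l (𝓝 t)) :
    Tendsto (fun x => (1 + g x) ^ n x) l (𝓝 (exp t)) := by
  have hpos : ∀ᶠ x in l, 0 < 1 + g x := by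
    filter_upwards [hg.eventually (Ioi_mem_nhds (by norm_num : (-1 : ℝ) < 0))] with x hx
    linarith [show -1 < g x from hx]
  -- `g / (1 + g) ≤ log (1 + g) ≤ g`
  have hlower : Tendsto (fun x => n x * g x / (1 + g x)) l (𝓝 t) := by
    have := hng.div (tendsto_const_nhds.add hg) (by norm_num : (1 : ℝ) + 0 ≠ 0)
    rwa [add_zero, div_one] at this
  have hlog : Tendsto (fun x => n x * log (1 + g x)) l (𝓝 t) := by
    refine tendsto_of_tendsto_of_tendsto_of_le_of_le' hlower hng ?_ ?_
    · filter_upwards [hpos] with x hx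
      have := one_sub_inv_le_log_of_pos hx
      rw [mul_div_assoc]
      refine mul_le_mul_of_nonneg_left ?_ (Nat.cast_nonneg _)
      calc g x / (1 + g x) = 1 - (1 + g x)⁻¹ := by field_simp; ring
        _ ≤ _ := this
    · filter_upwards [hpos] with x hx
      refine mul_le_mul_of_nonneg_left ?_ (Nat.cast_nonneg _)
      linarith [log_le_sub_one_of_pos hx]
  refine ((continuous_exp.tendsto t).comp hlog).congr' ?_
  filter_upwards [hpos] with x hx
  simp only [Function.comp_apply, exp_nat_mul, exp_log hx]

theorem HasDerivAt.tendsto_pow_exp {f : ℝ → ℝ} {f' t : ℝ} {l : Filter ℝ} {n : ℝ → ℕ}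
    (hf : HasDerivAt f f' 0) (hf0 : f 0 = 1) (hl : l ≤ 𝓝[≠] 0)
    (hn : Tendsto (fun ε => ε * n ε) l (𝓝 t)) :
    Tendsto (fun ε => f ε ^ n ε) l (𝓝 (Real.exp (t * f'))) := by
  have hg : Tendsto (fun ε => f ε - 1) l (𝓝 0) := by
    have := (hf.continuousAt.tendsto.mono_left (hl.trans nhdsWithin_le_nhds)).sub_const 1
    rwa [hf0, sub_self] at this
  have hslope : Tendsto (fun ε => ε⁻¹ * (f ε - 1)) l (𝓝 f') := by
    simpa [hf0] using (hasDerivAt_iff_tendsto_slope_zero.mp hf).mono_left hl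
  have hng : Tendsto (fun ε => n ε * (f ε - 1)) l (𝓝 (t * f')) := by
    refine (hn.mul hslope).congr' ?_
    filter_upwards [hl self_mem_nhdsWithin] with ε (hε : ε ≠ 0)
    field_simp
  simpa using tendsto_one_add_pow_exp_of_tendsto_zero hg hng

theorem tendsto_mul_nat_floor_div_nhdsGT_zero {a : ℝ} (ha : 0 ≤ a) :
    Tendsto (fun ε : ℝ => ε * ⌊a / ε⌋₊) (𝓝[>] 0) (𝓝 a) := by
  refine ((tendsto_nat_floor_mul_div_atTop ha).comp tendsto_inv_nhdsGT_zero).congr fun ε => ?_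
  simp [div_eq_mul_inv, mul_comm]

namespace Matrix

theorem sum_prod_path_eq_dotProduct_pow_mulVec {α R : Type*} [Fintype α] [DecidableEq α]
    [CommSemiring R] (Q : Matrix α α R) (g : α → R) (n : ℕ) (f : α → R) :
    ∑ y : Fin (n + 1) → α,
        f (y 0) * (∏ i : Fin n, Q (y i.castSucc) (y i.succ)) * g (y (Fin.last n)) =
      f ⬝ᵥ (Q ^ n *ᵥ g) := by
  induction n generalizing f with
  | zero =>
    rw [pow_zero, one_mulVec, ← (Equiv.funUnique (Fin 1) α).symm.sum_comp]
    simp [dotProduct]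
  | succ n ih =>
    rw [← (Fin.consEquiv fun _ => α).sum_comp, Fintype.sum_prod_type, pow_succ',
      ← mulVec_mulVec]
    refine Finset.sum_congr rfl fun a _ => ?_
    simp only [Fin.consEquiv_apply, Fin.cons_zero, Fin.prod_univ_succ, Fin.castSucc_zero,
      Fin.cons_succ, ← Fin.succ_castSucc, ← Fin.succ_last]
    change _ = f a * (Q a ⬝ᵥ (Q ^ n *ᵥ g))
    rw [← ih, Finset.mul_sum]
    exact Finset.sum_congr rfl fun y _ => by ring

end Matrix

def killedMatrix {α : Type*} [DecidableEq α] (P : α → α → ℝ) (s : α) : Matrix α α ℝ :=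
  Matrix.of fun a b => if b = s then 0 else P a b

theorem lt_hitTime_iff {s : WLState} {ω : ℕ → WLState} (hs : ∃ k, ω k = s) {n : ℕ} :
    n < hitTime s ω ↔ ∀ k ≤ n, ω k ≠ s := by
  refine ⟨fun h k hk => Nat.notMem_of_lt_sInf (hk.trans_lt h), fun h => ?_⟩
  by_contra! hle
  exact h _ hle (Nat.sInf_mem hs)

namespace IsChainLaw

variable {P : WLState → WLState → ℝ} {x0 : WLState} {μ : Measure (ℕ → WLState)}

theorem measure_cylinder (hμ : IsChainLaw (fun _ _ => P) x0 μ) (hP : ∀ a b, 0 ≤ P a b) (n : ℕ)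
    (y : Fin (n + 1) → WLState) :
    μ ((fun ω (i : Fin (n + 1)) => ω i) ⁻¹' {y}) =
      ENNReal.ofReal ((if y 0 = x0 then 1 else 0) * ∏ i : Fin n, P (y i.castSucc) (y i.succ)) := by
  have hset : (fun ω (i : Fin (n + 1)) => ω i) ⁻¹' {y} =
      {ω : ℕ → WLState | ∀ k ≤ n, ω k = y (Fin.ofNat (n + 1) k)} := by
    ext ω
    simp only [mem_preimage, mem_singleton_iff, funext_iff, Fin.forall_iff,
      Nat.lt_succ_iff]
    refine forall₂_congr fun k hk => ?_
    rw [show Fin.ofNat (n + 1) k = ⟨k, by omega⟩ from Fin.ext (Nat.mod_eq_of_lt (by omega))]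
  have hcast : ∀ i : Fin n, Fin.ofNat (n + 1) i = i.castSucc ∧
      Fin.ofNat (n + 1) (i + 1) = i.succ := fun i => by
    constructor <;> ext <;> simp [Nat.mod_eq_of_lt, i.isLt]
  rw [hset, hμ n, ENNReal.ofReal_mul (by positivity),
    ENNReal.ofReal_prod_of_nonneg fun i _ => hP _ _, ← Fin.prod_univ_eq_prod_range]
  simp only [hcast]
  congr 1
  split_ifs <;> simp_all

theorem measure_forall_le_ne (hμ : IsChainLaw (fun _ _ => P) x0 μ) (hP : ∀ a b, 0 ≤ P a b)
    {s : WLState} (hs : x0 ≠ s) (n : ℕ) :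
    μ {ω | ∀ k ≤ n, ω k ≠ s} = ENNReal.ofReal (∑ b, (killedMatrix P s ^ n) x0 b) := by
  set proj := fun (ω : ℕ → WLState) (i : Fin (n + 1)) => ω i
  have hproj : Measurable proj := measurable_pi_lambda _ fun i => measurable_pi_apply _
  have hset : {ω | ∀ k ≤ n, ω k ≠ s} =
      proj ⁻¹' ↑(Finset.univ.filter fun y : Fin (n + 1) → WLState => ∀ i, y i ≠ s) := by
    ext ω
    simp [proj, Fin.forall_iff]
  have hweight : ∀ y : Fin (n + 1) → WLState,
      (if ∀ i, y i ≠ s then (if y 0 = x0 then 1 else 0) * ∏ i : Fin n, P (y i.castSucc) (y i.succ)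
        else 0) =
      (if y 0 = x0 then 1 else 0) * (∏ i : Fin n, killedMatrix P s (y i.castSucc) (y i.succ)) *
        (1 : WLState → ℝ) (y (Fin.last n)) := by
    intro y
    simp only [killedMatrix, Matrix.of_apply, Pi.one_apply, mul_one]
    simp_rw [Fin.forall_fin_succ (P := fun i => y i ≠ s), ← ite_not (y _ = s),
      Fintype.prod_ite_zero]
    by_cases h0 : y 0 = x0 <;> simp [h0, hs]
  rw [hset, ← sum_measure_preimage_singleton _ fun y _ => hproj (measurableSet_singleton y),
    Finset.sum_congr rfl fun y _ => hμ.measure_cylinder hP n y,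
    ← ENNReal.ofReal_sum_of_nonneg fun y _ =>
      mul_nonneg (by split_ifs <;> norm_num) (Finset.prod_nonneg fun i _ => hP _ _),
    Finset.sum_filter, Finset.sum_congr rfl fun y _ => hweight y,
    Matrix.sum_prod_path_eq_dotProduct_pow_mulVec (killedMatrix P s) 1 n
      fun a => if a = x0 then 1 else 0]
  simp [dotProduct, Matrix.mulVec]

end IsChainLaw

namespace Pbar

theorem nonneg {ε : ℝ} (h0 : 0 ≤ ε) (h3 : ε ≤ 3) (a b : WLState) : 0 ≤ Pbar ε a b := by
  fin_cases a <;> fin_cases b <;> simp [Pbar] <;> linarith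

def sqrtDisc (ε : ℝ) : ℝ := √(1 / 9 + ε ^ 2 / 36)

def eigPlus (ε : ℝ) : ℝ := 2 / 3 - ε / 6 + sqrtDisc ε

def eigMinus (ε : ℝ) : ℝ := 2 / 3 - ε / 6 - sqrtDisc ε

def survival (ε : ℝ) (n : ℕ) : ℝ := ∑ b, (killedMatrix (Pbar ε) 2 ^ n) 0 b

theorem sq_sqrtDisc (ε : ℝ) : sqrtDisc ε ^ 2 = 1 / 9 + ε ^ 2 / 36 :=
  Real.sq_sqrt (by positivity)

theorem one_third_le_sqrtDisc (ε : ℝ) : 1 / 3 ≤ sqrtDisc ε :=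
  Real.le_sqrt_of_sq_le (by nlinarith [sq_nonneg ε])

theorem sqrtDisc_le {ε : ℝ} (hε : 0 ≤ ε) : sqrtDisc ε ≤ 1 / 3 + ε / 6 :=
  Real.sqrt_le_iff.mpr ⟨by positivity, by nlinarith⟩

theorem sqrtDisc_lt {ε : ℝ} (hε : 0 < ε) : sqrtDisc ε < 1 / 3 + ε / 6 :=
  (Real.sqrt_lt' (by positivity)).mpr (by nlinarith)

theorem killedMatrix_pow_zero_apply (ε : ℝ) (n : ℕ) :
    2 * sqrtDisc ε * (killedMatrix (Pbar ε) 2 ^ n) 0 0 =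
        (1 / 3 - ε / 6 + sqrtDisc ε) * eigPlus ε ^ n +
          (sqrtDisc ε - 1 / 3 + ε / 6) * eigMinus ε ^ n ∧
      6 * sqrtDisc ε * (killedMatrix (Pbar ε) 2 ^ n) 0 1 =
        ε * (eigPlus ε ^ n - eigMinus ε ^ n) ∧
      (killedMatrix (Pbar ε) 2 ^ n) 0 2 = 0 := by
  have hr := sq_sqrtDisc ε
  -- `(1/3 - ε/6 + r, ε/3)` and `(r - 1/3 + ε/6, -ε/3)` are left eigenvectors of the block for
  -- `λ₊` and `λ₋`, and they sum to `2r (1, 0)`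
  have hplus₀ : (1 - ε / 3) * (1 / 3 - ε / 6 + sqrtDisc ε) + ε / 9 =
      (1 / 3 - ε / 6 + sqrtDisc ε) * eigPlus ε := by
    unfold eigPlus; linear_combination -hr
  have hplus₁ : ε * (1 / 3 - ε / 6 + sqrtDisc ε) + ε / 3 = ε * eigPlus ε := by
    unfold eigPlus; ring
  have hminus₀ : (1 - ε / 3) * (sqrtDisc ε - 1 / 3 + ε / 6) - ε / 9 =
      (sqrtDisc ε - 1 / 3 + ε / 6) * eigMinus ε := by
    unfold eigMinus; linear_combination hr
  have hminus₁ : ε * (sqrtDisc ε - 1 / 3 + ε / 6) - ε / 3 = -(ε * eigMinus ε) := by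
    unfold eigMinus; ring
  induction n with
  | zero =>
    simp only [pow_zero, Matrix.one_apply_eq, Matrix.one_apply_ne (by decide : (0 : WLState) ≠ 1),
      Matrix.one_apply_ne (by decide : (0 : WLState) ≠ 2), mul_one, mul_zero, sub_self, and_true]
    ring
  | succ n ih =>
    obtain ⟨ih0, ih1, ih2⟩ := ih
    rw [pow_succ]
    generalize killedMatrix (Pbar ε) 2 ^ n = q at ih0 ih1 ih2 ⊢
    simp only [Matrix.mul_apply, Fin.sum_univ_three, killedMatrix, Matrix.of_apply, Pbar,
      Matrix.cons_val', Matrix.cons_val_fin_one, Matrix.cons_val_zero, Matrix.cons_val_one,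
      Matrix.cons_val, Fin.reduceEq, ↓reduceIte, mul_zero, add_zero, one_div, and_true]
    refine ⟨?_, ?_⟩
    · linear_combination (1 - ε / 3) * ih0 + ih1 / 9 + eigPlus ε ^ n * hplus₀ +
        eigMinus ε ^ n * hminus₀
    · linear_combination ε * ih0 + ih1 / 3 + 2 * ε * sqrtDisc ε * ih2 + eigPlus ε ^ n * hplus₁ +
        eigMinus ε ^ n * hminus₁

theorem survival_eq (ε : ℝ) (n : ℕ) :
    survival ε n = eigPlus ε ^ n +
      (1 / 3 + ε / 6 - sqrtDisc ε) / (2 * sqrtDisc ε) * (eigPlus ε ^ n - eigMinus ε ^ n) := by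
  obtain ⟨h0, h1, h2⟩ := killedMatrix_pow_zero_apply ε n
  have hr : 0 < sqrtDisc ε := by linarith [one_third_le_sqrtDisc ε]
  rw [survival, Fin.sum_univ_three, h2]
  field_simp
  linear_combination 18 * h0 + 6 * h1

theorem eigMinus_nonneg {ε : ℝ} (hε : ε ≤ 3 / 2) : 0 ≤ eigMinus ε := by
  have := sq_sqrtDisc ε
  have := one_third_le_sqrtDisc ε
  unfold eigMinus
  nlinarith

theorem eigMinus_le_eigPlus (ε : ℝ) : eigMinus ε ≤ eigPlus ε := by
  unfold eigMinus eigPlus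
  linarith [one_third_le_sqrtDisc ε]

theorem eigPlus_nonneg {ε : ℝ} (hε : ε ≤ 3 / 2) : 0 ≤ eigPlus ε :=
  (eigMinus_nonneg hε).trans (eigMinus_le_eigPlus ε)

theorem eigPlus_lt_one {ε : ℝ} (hε : 0 < ε) : eigPlus ε < 1 := by
  unfold eigPlus
  linarith [sqrtDisc_lt hε]

theorem pow_eigPlus_le_survival {ε : ℝ} (h0 : 0 ≤ ε) (h1 : ε ≤ 1) (n : ℕ) :
    eigPlus ε ^ n ≤ survival ε n ∧ survival ε n ≤ (1 + ε / 4) * eigPlus ε ^ n := by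
  have hr := one_third_le_sqrtDisc ε
  have hminus := eigMinus_nonneg (by linarith : ε ≤ 3 / 2)
  have hgap : 0 ≤ eigPlus ε ^ n - eigMinus ε ^ n :=
    sub_nonneg.mpr (pow_le_pow_left₀ hminus (eigMinus_le_eigPlus ε) n)
  have hgap' : eigPlus ε ^ n - eigMinus ε ^ n ≤ eigPlus ε ^ n :=
    sub_le_self _ (pow_nonneg hminus n)
  have hcoef : 0 ≤ (1 / 3 + ε / 6 - sqrtDisc ε) / (2 * sqrtDisc ε) :=
    div_nonneg (by linarith [sqrtDisc_le h0]) (by linarith)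
  have hcoef' : (1 / 3 + ε / 6 - sqrtDisc ε) / (2 * sqrtDisc ε) ≤ ε / 4 := by
    rw [div_le_iff₀ (by linarith)]
    nlinarith
  rw [survival_eq]
  constructor
  · nlinarith
  · nlinarith [mul_le_mul hcoef' hgap' hgap (by linarith)]

theorem eigPlus_zero : eigPlus 0 = 1 := by
  rw [eigPlus, sqrtDisc, show (1 / 9 + (0 : ℝ) ^ 2 / 36) = (1 / 3) ^ 2 by norm_num,
    Real.sqrt_sq (by norm_num)]
  norm_num

theorem hasDerivAt_eigPlus : HasDerivAt eigPlus (-1 / 6) 0 := by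
  have hlin : HasDerivAt (fun ε : ℝ => 2 / 3 - ε / 6) (-1 / 6) 0 :=
    (((hasDerivAt_id (0 : ℝ)).div_const 6).const_sub (2 / 3)).congr_deriv (by norm_num)
  have hdisc : HasDerivAt (fun ε : ℝ => 1 / 9 + ε ^ 2 / 36) 0 0 := by
    simpa using ((hasDerivAt_pow 2 (0 : ℝ)).div_const 36).const_add (1 / 9)
  refine (hlin.add (hdisc.sqrt (by norm_num))).congr_deriv ?_
  norm_num

section Measure

variable {ε : ℝ} {μ : Measure (ℕ → WLState)}

theorem measure_forall_le_ne_two (hε : ε ∈ Ioo (0 : ℝ) 1)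
    (hμ : IsChainLaw (fun _ _ => Pbar ε) 0 μ) (n : ℕ) :
    μ {ω | ∀ k ≤ n, ω k ≠ 2} = ENNReal.ofReal (survival ε n) :=
  hμ.measure_forall_le_ne (nonneg hε.1.le (by linarith [hε.2])) (by decide) n

theorem measure_forall_ne_two (hε : ε ∈ Ioo (0 : ℝ) 1)
    (hμ : IsChainLaw (fun _ _ => Pbar ε) 0 μ) :
    μ {ω | ∀ k, ω k ≠ 2} = 0 := by
  have hlim : Tendsto (fun n => ENNReal.ofReal ((1 + ε / 4) * eigPlus ε ^ n)) atTop (𝓝 0) := by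
    rw [← ENNReal.ofReal_zero]
    refine ENNReal.tendsto_ofReal ?_
    simpa using (tendsto_pow_atTop_nhds_zero_of_lt_one (eigPlus_nonneg (by linarith [hε.2]))
      (eigPlus_lt_one hε.1)).const_mul (1 + ε / 4)
  refine le_antisymm (ge_of_tendsto' hlim fun n => ?_) zero_le
  calc μ {ω | ∀ k, ω k ≠ 2} ≤ μ {ω | ∀ k ≤ n, ω k ≠ 2} := measure_mono fun ω h k _ => h k
    _ = ENNReal.ofReal (survival ε n) := measure_forall_le_ne_two hε hμ n
    _ ≤ _ := ENNReal.ofReal_le_ofReal (pow_eigPlus_le_survival hε.1.le hε.2.le n).2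

theorem measure_lt_hitTime (hε : ε ∈ Ioo (0 : ℝ) 1)
    (hμ : IsChainLaw (fun _ _ => Pbar ε) 0 μ) (n : ℕ) :
    μ {ω | n < hitTime 2 ω} = ENNReal.ofReal (survival ε n) := by
  have hset : {ω | n < hitTime 2 ω} = {ω | ∀ k ≤ n, ω k ≠ 2} \ {ω | ∀ k, ω k ≠ 2} := by
    ext ω
    by_cases hs : ∃ k, ω k = 2
    · simp [lt_hitTime_iff hs, hs]
    · simp only [not_exists] at hs
      simp [hs, hitTime]
  rw [hset, measure_sdiff_null (measure_forall_ne_two hε hμ), measure_forall_le_ne_two hε hμ]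

theorem tendsto_survival_floor {c : ℝ} (hc : 0 ≤ c) :
    Tendsto (fun ε => survival ε ⌊6 * c / ε⌋₊) (𝓝[Ioo 0 1] 0) (𝓝 (Real.exp (-c))) := by
  have hfloor : Tendsto (fun ε : ℝ => ε * ⌊6 * c / ε⌋₊) (𝓝[Ioo 0 1] 0) (𝓝 (6 * c)) :=
    (tendsto_mul_nat_floor_div_nhdsGT_zero (by positivity)).mono_left
      (nhdsWithin_mono _ Ioo_subset_Ioi_self)
  have hpow : Tendsto (fun ε => eigPlus ε ^ ⌊6 * c / ε⌋₊) (𝓝[Ioo 0 1] 0)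
      (𝓝 (Real.exp (-c))) := by
    have := hasDerivAt_eigPlus.tendsto_pow_exp eigPlus_zero
      (nhdsWithin_mono _ fun ε hε => hε.1.ne') hfloor
    rwa [show 6 * c * (-1 / 6) = -c by ring] at this
  have hupper : Tendsto (fun ε => (1 + ε / 4) * eigPlus ε ^ ⌊6 * c / ε⌋₊) (𝓝[Ioo 0 1] 0)
      (𝓝 (Real.exp (-c))) := by
    have hcoef : Tendsto (fun ε : ℝ => 1 + ε / 4) (𝓝[Ioo 0 1] 0) (𝓝 1) :=
      ((continuous_const.add (continuous_id.div_const 4)).tendsto' 0 1 (by norm_num)).mono_left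
        nhdsWithin_le_nhds
    simpa using hcoef.mul hpow
  refine tendsto_of_tendsto_of_tendsto_of_le_of_le' hpow hupper ?_ ?_ <;>
    filter_upwards [self_mem_nhdsWithin] with ε hε
  exacts [(pow_eigPlus_le_survival hε.1.le hε.2.le _).1,
    (pow_eigPlus_le_survival hε.1.le hε.2.le _).2]

end Measure

end Pbar

theorem stmt1_general (μ : ℝ → Measure (ℕ → WLState))
    (hμ : ∀ ε ∈ Set.Ioo (0 : ℝ) 1, IsChainLaw (fun _ _ => Pbar ε) 0 (μ ε))
    (c : ℝ) (hc : 0 ≤ c) :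
    Tendsto (fun ε : ℝ => (μ ε {ω : ℕ → WLState | c < ε / 6 * (hitTime 2 ω : ℝ)}).toReal)
      (𝓝[Set.Ioo (0 : ℝ) 1] 0) (𝓝 (Real.exp (-c))) := by
  refine (Pbar.tendsto_survival_floor hc).congr' ?_
  filter_upwards [self_mem_nhdsWithin] with ε hε
  have hevent : {ω : ℕ → WLState | c < ε / 6 * (hitTime 2 ω : ℝ)} =
      {ω | ⌊6 * c / ε⌋₊ < hitTime 2 ω} := by
    ext ω
    change c < ε / 6 * (hitTime 2 ω : ℝ) ↔ ⌊6 * c / ε⌋₊ < hitTime 2 ω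
    rw [Nat.floor_lt (div_nonneg (by positivity) hε.1.le), div_lt_iff₀ hε.1]
    constructor <;> intro h <;> linarith
  have hsurv := (pow_nonneg (Pbar.eigPlus_nonneg (by linarith [hε.2])) _).trans
    (Pbar.pow_eigPlus_le_survival hε.1.le hε.2.le ⌊6 * c / ε⌋₊).1
  rw [hevent, Pbar.measure_lt_hitTime hε (hμ ε hε), ENNReal.toReal_ofReal hsurv]

/-- For every `c ≥ 0`,
`lim_{ε→0} P((ε/6)·T̄₁→₃ > c) = e^{−c}`. -/
theorem stmt1 (μ : ℝ → Measure (ℕ → WLState))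
    (hprob : ∀ ε ∈ Set.Ioo (0 : ℝ) 1, IsProbabilityMeasure (μ ε))
    (hμ : ∀ ε ∈ Set.Ioo (0 : ℝ) 1, IsChainLaw (fun _ _ => Pbar ε) 0 (μ ε))
    (c : ℝ) (hc : 0 ≤ c) :
    Tendsto (fun ε : ℝ => (μ ε {ω : ℕ → WLState | c < ε / 6 * (hitTime 2 ω : ℝ)}).toReal)
      (𝓝[Set.Ioo (0 : ℝ) 1] 0) (𝓝 (Real.exp (-c))) :=
  stmt1_general μ hμ c hc
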